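/- For reals a, b, c, x, y, define C₂ = t³ + (k + ε(aj - bk + 2xi + 2yj))t² + (1 + ε(ai + ck + 2yi - 2xj + b))t + k - cε and Q'₄ = t - k - xεi - yεj. Then C₂·(Q'₄)² = C·(t² + 1), where C = t³ - (k - ε(aj - bk))t² + (1 - ε(b + ai - ck))t - k + cε. -/

import Mathlib

open Polynomial DualNumber TrivSqZeroExt

noncomputable section

/-- Dual quaternions: dual numbers over the real quaternions. -/
abbrev DQ : Type := DualNumber (Quaternion ℝ)

/-- The quaternion unit i inside the dual quaternions. -/
def Di : DQ := inl ⟨0,1,0,0⟩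
/-- The quaternion unit j inside the dual quaternions. -/
def Dj : DQ := inl ⟨0,0,1,0⟩
/-- The quaternion unit k inside the dual quaternions. -/
def Dk : DQ := inl ⟨0,0,0,1⟩
/-- Embedding of real scalars into the dual quaternions. -/
def rr (x : ℝ) : DQ := algebraMap ℝ DQ x
/-- Dual quaternion conjugation: quaternion conjugation on primal and dual parts. -/
def qconj (h : DQ) : DQ := inl (star (fst h)) + inr (star (snd h))
/-- The Darboux motion polynomial
C = t³ - (k - ε(aj - bk))t² + (1 - ε(b + ai - ck))t - k + cε. -/
def darboux (a b c : ℝ) : Polynomial DQ :=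
  X ^ 3 - Polynomial.C (Dk - eps * (rr a * Dj - rr b * Dk)) * X ^ 2
    + Polynomial.C (1 - eps * (rr b + rr a * Di - rr c * Dk)) * X
    - Polynomial.C Dk + Polynomial.C (rr c * eps)
/-- The cubic motion polynomial C₂ of the factorization FIII. -/
def C2 (a b c x y : ℝ) : Polynomial DQ :=
  X ^ 3 + Polynomial.C (Dk + eps * (rr a * Dj - rr b * Dk + rr (2*x) * Di + rr (2*y) * Dj)) * X ^ 2
    + Polynomial.C (1 + eps * (rr a * Di + rr c * Dk + rr (2*y) * Di - rr (2*x) * Dj + rr b)) * X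
    + Polynomial.C (Dk - rr c * eps)

/-!
Write `h = k + ε(xi + yj)`, so that `Q'₄ = t - h`. Since `t` is central, `(t - h)²` and `t² + 1`
are monic quadratics `t² + q₁t + q₀`, and both sides are products of a monic cubic with such a
quadratic. The five lower coefficients of such a product are given by the usual convolution
formulas, with the cubic's coefficient always on the left; for the two sides they are dual
quaternion identities, which are checked on the eight real components.
-/

section MonicProduct

variable {A : Type*} [Ring A]

theorem sub_C_sq (s : A) : (X - C s) ^ 2 = X ^ 2 + C (-(s + s)) * X + C (s * s) := by
  simp only [sq, mul_sub, sub_mul, X_mul_C, C_neg, C_add, C_mul, add_mul, neg_mul]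
  abel

theorem monic_cubic_mul_monic_quadratic (p₂ p₁ p₀ q₁ q₀ : A) :
    (X ^ 3 + C p₂ * X ^ 2 + C p₁ * X + C p₀) * (X ^ 2 + C q₁ * X + C q₀) =
      X ^ 5 + C (p₂ + q₁) * X ^ 4 + C (p₁ + p₂ * q₁ + q₀) * X ^ 3
        + C (p₀ + p₁ * q₁ + p₂ * q₀) * X ^ 2 + C (p₀ * q₁ + p₁ * q₀) * X + C (p₀ * q₀) := by
  simp only [C_mul_X_eq_monomial, X_pow_eq_monomial]
  simp only [← monomial_zero_left, monomial_mul_monomial, mul_add, add_mul, map_add, one_mul,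
    mul_one]
  abel

theorem monic_cubic_mul_monic_quadratic_eq {p₂ p₁ p₀ q₁ q₀ p₂' p₁' p₀' q₁' q₀' : A}
    (h₄ : p₂ + q₁ = p₂' + q₁') (h₃ : p₁ + p₂ * q₁ + q₀ = p₁' + p₂' * q₁' + q₀')
    (h₂ : p₀ + p₁ * q₁ + p₂ * q₀ = p₀' + p₁' * q₁' + p₂' * q₀')
    (h₁ : p₀ * q₁ + p₁ * q₀ = p₀' * q₁' + p₁' * q₀') (h₀ : p₀ * q₀ = p₀' * q₀') :
    (X ^ 3 + C p₂ * X ^ 2 + C p₁ * X + C p₀) * (X ^ 2 + C q₁ * X + C q₀) =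
      (X ^ 3 + C p₂' * X ^ 2 + C p₁' * X + C p₀') * (X ^ 2 + C q₁' * X + C q₀') := by
  rw [monic_cubic_mul_monic_quadratic, monic_cubic_mul_monic_quadratic, h₄, h₃, h₂, h₁, h₀]

end MonicProduct

/- Stated component by component: `Di.fst = ⟨0, 1, 0, 0⟩` would have type `QuaternionAlgebra ℝ (-1) 0 (-1)`
rather than `ℍ`, and the `Quaternion` simp lemmas would then not fire. -/
theorem re_fst_Di : Di.fst.re = 0 := rfl
theorem imI_fst_Di : Di.fst.imI = 1 := rfl
theorem imJ_fst_Di : Di.fst.imJ = 0 := rfl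
theorem imK_fst_Di : Di.fst.imK = 0 := rfl
theorem re_fst_Dj : Dj.fst.re = 0 := rfl
theorem imI_fst_Dj : Dj.fst.imI = 0 := rfl
theorem imJ_fst_Dj : Dj.fst.imJ = 1 := rfl
theorem imK_fst_Dj : Dj.fst.imK = 0 := rfl
theorem re_fst_Dk : Dk.fst.re = 0 := rfl
theorem imI_fst_Dk : Dk.fst.imI = 0 := rfl
theorem imJ_fst_Dk : Dk.fst.imJ = 0 := rfl
theorem imK_fst_Dk : Dk.fst.imK = 1 := rfl
theorem snd_Di : Di.snd = 0 := rfl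
theorem snd_Dj : Dj.snd = 0 := rfl
theorem snd_Dk : Dk.snd = 0 := rfl
theorem fst_rr (x : ℝ) : (rr x).fst = x := rfl
theorem snd_rr (x : ℝ) : (rr x).snd = 0 := rfl

theorem darboux_eq_monic_cubic (a b c : ℝ) : darboux a b c =
    X ^ 3 + C (-(Dk - eps * (rr a * Dj - rr b * Dk))) * X ^ 2
      + C (1 - eps * (rr b + rr a * Di - rr c * Dk)) * X + C (-Dk + rr c * eps) := by
  -- `neg_mul` is avoided: unifying the two `Neg` instances on `DQ[X]` times out
  simp only [darboux, C_neg, C_add, C_sub, sub_mul, neg_sub]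
  abel

/-- C₂·(Q'₄)² = C·(t²+1) where Q'₄ = t - k - xεi - yεj. -/
theorem stmt18 (a b c x y : ℝ) :
    C2 a b c x y * (X - Polynomial.C (Dk + rr x * eps * Di + rr y * eps * Dj)) ^ 2 =
      darboux a b c * (X ^ 2 + 1) := by
  have hX : (X ^ 2 + 1 : DQ[X]) = X ^ 2 + C 0 * X + C 1 := by simp
  rw [C2, darboux_eq_monic_cubic, sub_C_sq, hX]
  apply monic_cubic_mul_monic_quadratic_eq <;> apply TrivSqZeroExt.ext <;> apply Quaternion.ext <;>
    simp only [TrivSqZeroExt.fst_mul, DualNumber.snd_mul, fst_add, snd_add, fst_sub, snd_sub,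
      fst_neg, snd_neg, fst_one, snd_one, fst_eps, snd_eps, fst_rr, snd_rr, snd_Di, snd_Dj, snd_Dk,
      re_fst_Di, imI_fst_Di, imJ_fst_Di, imK_fst_Di, re_fst_Dj, imI_fst_Dj, imJ_fst_Dj, imK_fst_Dj,
      re_fst_Dk, imI_fst_Dk, imJ_fst_Dk, imK_fst_Dk,
      Quaternion.re_mul, Quaternion.imI_mul, Quaternion.imJ_mul, Quaternion.imK_mul,
      Quaternion.re_add, Quaternion.imI_add, Quaternion.imJ_add, Quaternion.imK_add,
      Quaternion.re_sub, Quaternion.imI_sub, Quaternion.imJ_sub, Quaternion.imK_sub,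
      Quaternion.re_neg, Quaternion.imI_neg, Quaternion.imJ_neg, Quaternion.imK_neg,
      Quaternion.re_coe, Quaternion.imI_coe, Quaternion.imJ_coe, Quaternion.imK_coe,
      Quaternion.re_one, Quaternion.imI_one, Quaternion.imJ_one, Quaternion.imK_one,
      mul_zero, zero_mul, mul_one, one_mul, add_zero, zero_add, sub_zero, zero_sub, neg_zero] <;>
    ring
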